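/- arXiv:1505.06558 — 8 statements merged into one kernel-verified Lean document; each statement's English description precedes it below -/
import Mathlib

section
/- In the setting of the base extension of groups, the composite Σ → G ⋉ Σ → Γ = (G ⋉ Σ)/Ξ of the inclusion φ ↦ (1, φ) with the quotient map induces a bijection between the set F\Σ of right cosets of F in Σ and the set G\Γ of right cosets of (the image of) G in Γ. -/
/-!
Write `π : Σ → Γ`, `φ ↦ [(1, φ)]`; it is a homomorphism. Right cosets correspond along any
homomorphism `π : Σ → Γ` once `F = π⁻¹(K)` and `Γ = K · π(Σ)`, and both hold for `K = G`:
every `[(g, φ)]` equals `[(g, 1)] · π φ`, and `π φ ∈ G` means `(1, φ)⁻¹ (g, 1) = (g, (φ⁻¹)^g)`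
lies in `Ξ`, which by (A2) forces `φ ∈ F`, while conversely `π f = [(i f, 1)]` for `f ∈ F`.
-/
/-- A right action of `G` on `S` by group automorphisms, i.e. an
anti-homomorphism `G → Aut S`; we write `act φ g` for `φ^g`. -/
structure RightAutAction (S G : Type*) [Group S] [Group G] where
  act : S → G → S
  act_mul : ∀ φ ψ g, act (φ * ψ) g = act φ g * act ψ g
  act_one : ∀ φ, act φ 1 = φ
  act_act : ∀ φ g g', act (act φ g) g' = act φ (g * g')

theorem RightAutAction.act_one_left {S G : Type*} [Group S] [Group G]
    (α : RightAutAction S G) (g : G) : α.act 1 g = 1 := by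
  have h2 : α.act 1 g = α.act 1 g * α.act 1 g := by
    simpa using (α.act_mul 1 1 g).symm
  simpa using h2

theorem RightAutAction.act_inv {S G : Type*} [Group S] [Group G]
    (α : RightAutAction S G) (φ : S) (g : G) :
    α.act φ⁻¹ g = (α.act φ g)⁻¹ := by
  have h := α.act_mul φ⁻¹ φ g
  rw [inv_mul_cancel, α.act_one_left] at h
  exact eq_inv_of_mul_eq_one_left h.symm

/-- The semidirect product `G ⋉ S` determined by the right action `α`,
with multiplication `(g, φ)(g', φ') = (g g', φ^{g'} φ')`.  (A type synonym
for `G × S` carrying this group structure.) -/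
def SD (S G : Type*) [Group S] [Group G] (_α : RightAutAction S G) : Type _ := G × S

/-- The element `(g, φ)` of `G ⋉ S`. -/
def SD.mk {S G : Type*} [Group S] [Group G] {α : RightAutAction S G}
    (g : G) (φ : S) : SD S G α := (g, φ)

instance SD.instGroup {S G : Type*} [Group S] [Group G] (α : RightAutAction S G) :
    Group (SD S G α) where
  mul x y := SD.mk (Prod.fst (x : G × S) * Prod.fst (y : G × S))
    (α.act (Prod.snd (x : G × S)) (Prod.fst (y : G × S)) * Prod.snd (y : G × S))
  one := SD.mk 1 1
  inv x := SD.mk (Prod.fst (x : G × S))⁻¹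
    (α.act (Prod.snd (x : G × S)) (Prod.fst (x : G × S))⁻¹)⁻¹
  mul_assoc := by
    rintro ⟨g1, s1⟩ ⟨g2, s2⟩ ⟨g3, s3⟩
    refine Prod.ext ?_ ?_
    · show (g1 * g2) * g3 = g1 * (g2 * g3)
      exact mul_assoc ..
    · show α.act (α.act s1 g2 * s2) g3 * s3 =
        α.act s1 (g2 * g3) * (α.act s2 g3 * s3)
      simp [α.act_mul, α.act_act, mul_assoc]
  one_mul := by
    rintro ⟨g, s⟩
    show SD.mk _ _ = (⟨g, s⟩ : G × S)
    show ((1 : G) * g, α.act (1 : S) g * s) = (g, s)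
    simp [SD.mk, RightAutAction.act_one_left]
  mul_one := by
    rintro ⟨g, s⟩
    show SD.mk _ _ = (⟨g, s⟩ : G × S)
    show (g * (1 : G), α.act s (1 : G) * (1 : S)) = (g, s)
    simp [SD.mk, α.act_one]
  inv_mul_cancel := by
    rintro ⟨g, s⟩
    show SD.mk _ _ = SD.mk 1 1
    simp [SD.mk, α.act_inv, α.act_act, α.act_one]
    rfl

theorem Subgroup.rightRel_map_iff_of_comap_eq {S Γ : Type*} [Group S] [Group Γ]
    (π : S →* Γ) {F : Subgroup S} {K : Subgroup Γ} (hF : K.comap π = F) (φ ψ : S) :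
    QuotientGroup.rightRel K (π φ) (π ψ) ↔ QuotientGroup.rightRel F φ ψ := by
  simp only [QuotientGroup.rightRel_apply, ← hF, Subgroup.mem_comap, map_mul, map_inv]

noncomputable def Subgroup.rightCosetsEquivOfComapEq {S Γ : Type*} [Group S] [Group Γ]
    (π : S →* Γ) {F : Subgroup S} {K : Subgroup Γ} (hF : K.comap π = F)
    (hK : ∀ γ : Γ, ∃ φ : S, γ * (π φ)⁻¹ ∈ K) :
    Quotient (QuotientGroup.rightRel F) ≃ Quotient (QuotientGroup.rightRel K) :=
  Equiv.ofBijective (Quotient.map' π fun φ ψ ↦ (rightRel_map_iff_of_comap_eq π hF φ ψ).2) <| by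
    constructor
    · rintro ⟨φ⟩ ⟨ψ⟩ h
      exact Quotient.sound ((rightRel_map_iff_of_comap_eq π hF φ ψ).1 (Quotient.exact h))
    · rintro ⟨γ⟩
      obtain ⟨φ, hφ⟩ := hK γ
      exact ⟨⟦φ⟧, Quotient.sound (QuotientGroup.rightRel_apply.2 hφ)⟩

theorem Subgroup.rightCosetsEquivOfComapEq_mk {S Γ : Type*} [Group S] [Group Γ]
    (π : S →* Γ) {F : Subgroup S} {K : Subgroup Γ} (hF : K.comap π = F)
    (hK : ∀ γ : Γ, ∃ φ : S, γ * (π φ)⁻¹ ∈ K) (φ : S) :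
    rightCosetsEquivOfComapEq π hF hK ⟦φ⟧ = ⟦π φ⟧ :=
  rfl

namespace SD

variable {S G : Type*} [Group S] [Group G] {α : RightAutAction S G}

@[simp]
theorem mk_mul_mk (g g' : G) (φ φ' : S) :
    (mk g φ : SD S G α) * mk g' φ' = mk (g * g') (α.act φ g' * φ') :=
  rfl

@[simp]
theorem inv_mk (g : G) (φ : S) : (mk g φ : SD S G α)⁻¹ = mk g⁻¹ (α.act φ g⁻¹)⁻¹ :=
  rfl

theorem mk_inj {g g' : G} {φ φ' : S} :
    (mk g φ : SD S G α) = mk g' φ' ↔ g = g' ∧ φ = φ' :=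
  Prod.ext_iff

variable (α) in
def inr : S →* SD S G α where
  toFun φ := mk 1 φ
  map_one' := rfl
  map_mul' φ ψ := by simp [α.act_one]

@[simp]
theorem inr_apply (φ : S) : inr α φ = mk 1 φ :=
  rfl

theorem mk_eq_mk_one_mul_inr (g : G) (φ : S) : (mk g φ : SD S G α) = mk g 1 * inr α φ := by
  simp [α.act_one_left]

end SD

section BaseExtension

variable {S G : Type*} [Group S] [Group G] {α : RightAutAction S G} {F : Subgroup S} {i : F →* G}
  {Ξ : Subgroup (SD S G α)}

-- `(1, f)⁻¹ (i f, 1) = (i f, f⁻¹)` by (A2).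
theorem mk_inr_coe_eq_mk
    (hA2 : ∀ (f : F) (φ : S), α.act φ (i f) = (f : S)⁻¹ * φ * (f : S))
    (hΞ : (Ξ : Set (SD S G α)) = {p : SD S G α | ∃ f : F, p = SD.mk (i f) (f : S)⁻¹})
    (f : F) : (SD.inr α (f : S) : SD S G α ⧸ Ξ) = (SD.mk (i f) 1 : SD S G α) := by
  rw [QuotientGroup.eq, ← SetLike.mem_coe, hΞ]
  refine ⟨f, ?_⟩
  simp [α.act_one, α.act_inv, hA2]

theorem mem_of_mk_inr_eq_mk
    (hA2 : ∀ (f : F) (φ : S), α.act φ (i f) = (f : S)⁻¹ * φ * (f : S))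
    (hΞ : (Ξ : Set (SD S G α)) = {p : SD S G α | ∃ f : F, p = SD.mk (i f) (f : S)⁻¹})
    {φ : S} {g : G} (h : (SD.inr α φ : SD S G α ⧸ Ξ) = (SD.mk g 1 : SD S G α)) : φ ∈ F := by
  rw [QuotientGroup.eq, ← SetLike.mem_coe, hΞ] at h
  obtain ⟨f, hf⟩ := h
  simp only [SD.inr_apply, SD.inv_mk, SD.mk_mul_mk, α.act_one, inv_one, one_mul, mul_one,
    SD.mk_inj] at hf
  obtain ⟨rfl, hφ⟩ := hf
  rw [α.act_inv, hA2, inv_inj, mul_assoc, inv_mul_eq_iff_eq_mul, mul_left_inj] at hφ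
  exact hφ ▸ f.2

theorem comap_mk'_comp_inr_eq
    (hA2 : ∀ (f : F) (φ : S), α.act φ (i f) = (f : S)⁻¹ * φ * (f : S))
    (hΞ : (Ξ : Set (SD S G α)) = {p : SD S G α | ∃ f : F, p = SD.mk (i f) (f : S)⁻¹})
    [Ξ.Normal] {GΓ : Subgroup (SD S G α ⧸ Ξ)}
    (hGΓ : ∀ x : SD S G α ⧸ Ξ, x ∈ GΓ ↔ ∃ g : G, x = QuotientGroup.mk (SD.mk g 1)) :
    GΓ.comap ((QuotientGroup.mk' Ξ).comp (SD.inr α)) = F := by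
  ext φ
  simp only [Subgroup.mem_comap, MonoidHom.comp_apply, QuotientGroup.mk'_apply, hGΓ]
  constructor
  · rintro ⟨g, hg⟩
    exact mem_of_mk_inr_eq_mk hA2 hΞ hg
  · intro hφ
    exact ⟨i ⟨φ, hφ⟩, mk_inr_coe_eq_mk hA2 hΞ ⟨φ, hφ⟩⟩

theorem exists_mul_mk_inr_inv_mem [Ξ.Normal] {GΓ : Subgroup (SD S G α ⧸ Ξ)}
    (hGΓ : ∀ x : SD S G α ⧸ Ξ, x ∈ GΓ ↔ ∃ g : G, x = QuotientGroup.mk (SD.mk g 1))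
    (γ : SD S G α ⧸ Ξ) : ∃ φ : S, γ * ((QuotientGroup.mk' Ξ).comp (SD.inr α) φ)⁻¹ ∈ GΓ := by
  induction γ using QuotientGroup.induction_on with | H p => ?_
  refine ⟨(p : G × S).2, (hGΓ _).2 ⟨(p : G × S).1, ?_⟩⟩
  rw [MonoidHom.comp_apply, QuotientGroup.mk'_apply, ← QuotientGroup.mk_inv,
    ← QuotientGroup.mk_mul]
  exact congrArg _ (mul_inv_eq_of_eq_mul (SD.mk_eq_mk_one_mul_inr _ _))

end BaseExtension

theorem right_cosets_bijection_general
    (S G : Type*) [Group S] [Group G] (α : RightAutAction S G)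
    (F : Subgroup S) (i : F →* G)
    (hA2 : ∀ (f : F) (φ : S), α.act φ (i f) = (f : S)⁻¹ * φ * (f : S))
    (Ξ : Subgroup (SD S G α))
    (hΞ : (Ξ : Set (SD S G α)) =
      {p : SD S G α | ∃ f : F, p = SD.mk (i f) (f : S)⁻¹})
    [Ξ.Normal]
    -- `GΓ` is the image of `G` in `Γ`, regarded as a subgroup of `Γ`
    (GΓ : Subgroup (SD S G α ⧸ Ξ))
    (hGΓ : ∀ x : SD S G α ⧸ Ξ,
      x ∈ GΓ ↔ ∃ g : G, x = QuotientGroup.mk (SD.mk g 1)) :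
    ∃ b : Quotient (QuotientGroup.rightRel F) ≃
        Quotient (QuotientGroup.rightRel GΓ),
      ∀ φ : S, b (Quotient.mk (QuotientGroup.rightRel F) φ) =
        Quotient.mk (QuotientGroup.rightRel GΓ)
          (QuotientGroup.mk (SD.mk 1 φ)) :=
  ⟨Subgroup.rightCosetsEquivOfComapEq _ (comap_mk'_comp_inr_eq hA2 hΞ hGΓ)
    (exists_mul_mk_inr_inv_mem hGΓ), Subgroup.rightCosetsEquivOfComapEq_mk _ _ _⟩

theorem right_cosets_bijection
    (S G : Type*) [Group S] [Group G] (α : RightAutAction S G)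
    (F : Subgroup S) (i : F →* G)
    (hA2 : ∀ (f : F) (φ : S), α.act φ (i f) = (f : S)⁻¹ * φ * (f : S))
    (hA3 : ∀ (f : F) (g : G), α.act (f : S) g ∈ F)
    (hA3' : ∀ (f : F) (g : G), i ⟨α.act (f : S) g, hA3 f g⟩ = g⁻¹ * i f * g)
    (Ξ : Subgroup (SD S G α))
    (hΞ : (Ξ : Set (SD S G α)) =
      {p : SD S G α | ∃ f : F, p = SD.mk (i f) (f : S)⁻¹})
    [Ξ.Normal]
    -- `GΓ` is the image of `G` in `Γ`, regarded as a subgroup of `Γ`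
    (GΓ : Subgroup (SD S G α ⧸ Ξ))
    (hGΓ : ∀ x : SD S G α ⧸ Ξ,
      x ∈ GΓ ↔ ∃ g : G, x = QuotientGroup.mk (SD.mk g 1)) :
    ∃ b : Quotient (QuotientGroup.rightRel F) ≃
        Quotient (QuotientGroup.rightRel GΓ),
      ∀ φ : S, b (Quotient.mk (QuotientGroup.rightRel F) φ) =
        Quotient.mk (QuotientGroup.rightRel GΓ)
          (QuotientGroup.mk (SD.mk 1 φ)) :=
  right_cosets_bijection_general S G α F i hA2 Ξ hΞ GΓ hGΓ
end

section
/- Let g be a Lie superalgebra over a commutative ring k with a 2-operation, satisfying: g₀ is finitely generated projective over k and g₁ is finitely generated free over k. Let A be a super-commutative k-superalgebra and consider the elements e(a,v) = 1⊗1 + a⊗v and f(ε,x) = 1⊗1 + ε⊗x in A ⊗ U(g) for a ∈ A₁, v ∈ g₁, x ∈ g₀, ε ∈ A₀ with ε² = 0, where U(g) is the universal enveloping Hopf superalgebra. Then the following relation holds: e(a,u)·e(b,v) = f(−ab, [u,v])·e(b,v)·e(a,u) for all a, b ∈ A₁ and u, v ∈ g₁. -/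
/-!
STATEMENT 5 (Lemma 3.2 (i)).  In the Hopf superalgebra `A ⊗ U(g)` over the
super-commutative superalgebra `A`, with `e(a,v) = 1⊗1 + a⊗v` and
`f(ε,x) = 1⊗1 + ε⊗x`, the relation
`e(a,u) e(b,v) = f(−ab, [u,v]) e(b,v) e(a,u)` holds for `a, b ∈ A₁`,
`u, v ∈ g₁`.

We work in the ring `B = A ⊗ U(g)`; the letters denote the elements
`a = a⊗1`, `b = b⊗1` (odd elements of `A`, so square-zero and mutually
anti-commuting), `u = 1⊗u`, `v = 1⊗v` (odd elements of `g ⊂ U(g)`, which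
anti-commute with `a⊗1`, `b⊗1` by the sign rule of the super tensor
product), and `ℓ = 1⊗[u,v]` (even, `uv + vu = ℓ` in `U(g)`, commuting with
`a⊗1`, `b⊗1`).  Then `e(a,u) = 1 + a*u`, `f(−ab,[u,v]) = 1 + (−(a*b))*ℓ`.
-/
theorem relation_e_e
    (B : Type*) [Ring B] (a b u v ℓ : B)
    (ha : a * a = 0) (hb : b * b = 0) (hab : a * b = -(b * a))
    (hua : u * a = -(a * u)) (hub : u * b = -(b * u))
    (hva : v * a = -(a * v)) (hvb : v * b = -(b * v))
    (hla : ℓ * a = a * ℓ) (hlb : ℓ * b = b * ℓ)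
    (huv : u * v + v * u = ℓ) :
    (1 + a * u) * (1 + b * v) =
      (1 + (-(a * b)) * ℓ) * ((1 + b * v) * (1 + a * u)) := by
  have hba : b * a = -(a * b) := by rw [hab, neg_neg]
  have h1 : a * u * (b * v) = -(a * b * (u * v)) := by
    rw [show a * u * (b * v) = a * (u * b) * v by noncomm_ring, hub]; noncomm_ring
  have h2 : b * v * (a * u) = a * b * (v * u) := by
    rw [show b * v * (a * u) = b * (v * a) * u by noncomm_ring, hva,
      show b * -(a * v) * u = (b * a) * (v * u) * -1 by noncomm_ring, hba]; noncomm_ring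
  have h3 : a * b * ℓ * (b * v) = 0 := by
    rw [show a * b * ℓ * (b * v) = a * b * (ℓ * b) * v by noncomm_ring, hlb,
      show a * b * (b * ℓ) * v = a * (b * b) * (ℓ * v) by noncomm_ring, hb]; noncomm_ring
  have h4 : a * b * ℓ * (a * u) = 0 := by
    rw [show a * b * ℓ * (a * u) = a * b * (ℓ * a) * u by noncomm_ring, hla,
      show a * b * (a * ℓ) * u = a * (b * a) * (ℓ * u) by noncomm_ring, hba,
      show a * -(a * b) * (ℓ * u) = -((a * a) * (b * (ℓ * u))) by noncomm_ring, ha]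
    noncomm_ring
  have h5 : a * b * ℓ * (b * v * (a * u)) = 0 := by
    rw [show a * b * ℓ * (b * v * (a * u)) = (a * b * ℓ * (b * v)) * (a * u) by noncomm_ring, h3]
    noncomm_ring
  have hl : a * b * ℓ = a * b * (u * v) + a * b * (v * u) := by rw [← huv]; noncomm_ring
  calc (1 + a * u) * (1 + b * v)
      = 1 + a * u + b * v + a * u * (b * v) := by noncomm_ring
    _ = 1 + a * u + b * v + -(a * b * (u * v)) := by rw [h1]
    _ = 1 + b * v + a * u + a * b * (v * u) - a * b * ℓ := by rw [hl]; noncomm_ring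
    _ = (1 + (-(a * b)) * ℓ) * ((1 + b * v) * (1 + a * u)) := by
        rw [show (1 + (-(a * b)) * ℓ) * ((1 + b * v) * (1 + a * u)) =
          1 + b * v + a * u + b * v * (a * u) - a * b * ℓ - a * b * ℓ * (b * v)
            - a * b * ℓ * (a * u) - a * b * ℓ * (b * v * (a * u)) from by noncomm_ring,
          h5, h3, h4, h2]
        noncomm_ring
end

section
/- In the same setting (g a Lie superalgebra with 2-operation over k, A super-commutative), the relation e(a,v)·e(b,v) = f(−ab, v^⟨2⟩)·e(a+b, v) holds in A ⊗ U(g) for all a, b ∈ A₁ and v ∈ g₁, where e(a,v) = 1⊗1 + a⊗v and f(ε,x) = 1⊗1 + ε⊗x. -/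
/-!
STATEMENT 6 (Lemma 3.2 (ii)).  In `A ⊗ U(g)` the relation
`e(a,v) e(b,v) = f(−ab, v^⟨2⟩) e(a+b, v)` holds for `a, b ∈ A₁`,
`v ∈ g₁`.

We work in the ring `B = A ⊗ U(g)`: `a = a⊗1`, `b = b⊗1` are odd elements
of `A` (square-zero, anti-commuting), `v = 1⊗v` is odd in `U(g)` and
anti-commutes with `a⊗1`, `b⊗1`, and `s = 1⊗v^⟨2⟩` is even with `v² = s`
(the defining relation `v² = v^⟨2⟩` of `U(g)`) and commutes with `a⊗1`,
`b⊗1`.  Then `e(a,v) = 1 + a*v`, `f(−ab, v^⟨2⟩) = 1 + (−(a*b))*s`,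
`e(a+b,v) = 1 + (a+b)*v`.
-/
theorem relation_e_e_same_v
    (B : Type*) [Ring B] (a b v s : B)
    (ha : a * a = 0) (hb : b * b = 0) (hab : a * b = -(b * a))
    (hva : v * a = -(a * v)) (hvb : v * b = -(b * v))
    (hsa : s * a = a * s) (hsb : s * b = b * s)
    (hvv : v * v = s) :
    (1 + a * v) * (1 + b * v) =
      (1 + (-(a * b)) * s) * (1 + (a + b) * v) := by
  have h1 : a * v * (b * v) = -(a * b) * s := by
    have : a * v * (b * v) = a * (v * b) * v := by noncomm_ring
    rw [this, hvb, ← hvv]; noncomm_ring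
  have h2 : -(a * b) * s * ((a + b) * v) = 0 := by
    have ha' : a * b * a = 0 := by
      rw [show a * b * a = a * (b * a) from by noncomm_ring, ← neg_eq_iff_eq_neg.mpr hab]
      simp [show a * -(a * b) = -(a * a * b) from by noncomm_ring, ha]
    have hb' : a * b * b = 0 := by
      rw [show a * b * b = a * (b * b) from by noncomm_ring, hb, mul_zero]
    have : -(a * b) * s * ((a + b) * v) = -((a * b * a + a * b * b) * (s * v)) := by
      rw [show a * b * a + a * b * b = a * b * (a + b) from by noncomm_ring]
      rw [show -(a * b) * s * ((a + b) * v) = -(a * b * (s * (a + b)) * v) from by noncomm_ring]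
      rw [show s * (a + b) = (a + b) * s from by rw [mul_add, add_mul, hsa, hsb]]
      noncomm_ring
    rw [this, ha', hb']; simp
  calc (1 + a * v) * (1 + b * v)
      = 1 + (a + b) * v + a * v * (b * v) := by noncomm_ring
    _ = 1 + (a + b) * v + -(a * b) * s + (-(a * b) * s * ((a + b) * v)) := by
        rw [h1, h2, add_zero]
    _ = (1 + (-(a * b)) * s) * (1 + (a + b) * v) := by noncomm_ring
end

section
/- In the same setting, the relation e(a,v)·f(ε,x) = f(ε,x)·e(a,v)·e(εa, [v,x]) holds in A ⊗ U(g), where a ∈ A₁, v ∈ g₁, x ∈ g₀, and ε ∈ A₀ with ε² = 0. -/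
/-!
STATEMENT 7 (Lemma 3.2 (iii)).  In `A ⊗ U(g)` the relation
`e(a,v) f(ε,x) = f(ε,x) e(a,v) e(εa, [v,x])` holds, where `a ∈ A₁`,
`v ∈ g₁`, `x ∈ g₀`, and `ε ∈ A₀` with `ε² = 0`.

We work in the ring `B = A ⊗ U(g)`: `a = a⊗1` is odd in `A` (`a² = 0`);
`ε = ε⊗1` is even in `A` with `ε² = 0`, hence central among the listed
elements; `v = 1⊗v` is odd in `U(g)` and anti-commutes with `a⊗1`;
`x = 1⊗x` is even in `U(g)` and commutes with `a⊗1`; `c = 1⊗[v,x]` is odd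
(it anti-commutes with `a⊗1`), and `v x − x v = [v,x] = c` in `U(g)`.
Then `e(a,v) = 1 + a*v`, `f(ε,x) = 1 + ε*x`,
`e(εa, [v,x]) = 1 + (ε*a)*c`.
-/
theorem relation_e_f
    (B : Type*) [Ring B] (a ε v x c : B)
    (ha : a * a = 0) (hε : ε * ε = 0)
    (hεa : ε * a = a * ε) (hεv : ε * v = v * ε) (hεx : ε * x = x * ε)
    (hεc : ε * c = c * ε)
    (hva : v * a = -(a * v)) (hxa : x * a = a * x) (hca : c * a = -(a * c))
    (hvx : v * x - x * v = c) :
    (1 + a * v) * (1 + ε * x) =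
      (1 + ε * x) * ((1 + a * v) * (1 + (ε * a) * c)) := by
  have hvx' : v * x = x * v + c := by rw [← hvx]; noncomm_ring
  have key1 : a * v * (ε * x) = ε * a * (x * v) + ε * a * c := by
    calc a * v * (ε * x) = a * (v * ε) * x := by noncomm_ring
      _ = a * (ε * v) * x := by rw [hεv]
      _ = (a * ε) * (v * x) := by noncomm_ring
      _ = (ε * a) * (x * v + c) := by rw [← hεa, hvx']
      _ = ε * a * (x * v) + ε * a * c := by noncomm_ring
  have key2 : ε * x * (a * v) = ε * a * (x * v) := by
    calc ε * x * (a * v) = ε * (x * a) * v := by noncomm_ring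
      _ = ε * (a * x) * v := by rw [hxa]
      _ = ε * a * (x * v) := by noncomm_ring
  have key3 : a * v * (ε * a * c) = 0 := by
    calc a * v * (ε * a * c) = a * (v * ε) * (a * c) := by noncomm_ring
      _ = a * (ε * v) * (a * c) := by rw [hεv]
      _ = (a * ε) * (v * a) * c := by noncomm_ring
      _ = (ε * a) * (-(a * v)) * c := by rw [hεa, hva]
      _ = -(ε * ((a * a) * (v * c))) := by noncomm_ring
      _ = 0 := by rw [ha]; noncomm_ring
  have key4 : ε * x * (ε * a * c) = 0 := by
    calc ε * x * (ε * a * c) = ε * (x * ε) * (a * c) := by noncomm_ring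
      _ = ε * (ε * x) * (a * c) := by rw [← hεx]
      _ = (ε * ε) * (x * (a * c)) := by noncomm_ring
      _ = 0 := by rw [hε, zero_mul]
  have key5 : ε * x * (a * v * (ε * a * c)) = 0 := by rw [key3, mul_zero]
  calc (1 + a * v) * (1 + ε * x)
      = 1 + ε * x + a * v + a * v * (ε * x) := by noncomm_ring
    _ = 1 + ε * x + a * v + (ε * a * (x * v) + ε * a * c) := by rw [key1]
    _ = 1 + ε * x + a * v + ε * a * c + ε * a * (x * v) + 0 + 0 + 0 := by
        noncomm_ring
    _ = 1 + ε * x + a * v + ε * a * c + ε * x * (a * v) + a * v * (ε * a * c)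
        + ε * x * (ε * a * c) + ε * x * (a * v * (ε * a * c)) := by
        rw [key2, key3, key4, mul_zero]
    _ = (1 + ε * x) * ((1 + a * v) * (1 + (ε * a) * c)) := by noncomm_ring
end

section
/- Let R be a commutative k-algebra and g a Lie superalgebra over k with a 2-operation (·)^⟨2⟩ : g₁ → g₀, where g₁ is free as a k-module. Then there exists a unique map q : R ⊗ g₁ → R ⊗ g₀ such that q(Σᵢ cᵢ⊗vᵢ) = Σᵢ cᵢ²⊗vᵢ^⟨2⟩ + Σ_{i<j} cᵢcⱼ⊗[vᵢ,vⱼ] for every element Σᵢ cᵢ⊗vᵢ of R ⊗ g₁ (any finite presentation), and this q is a 2-operation on the Lie superalgebra g_R = R ⊗ g over R. -/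
/-!
Since `g₁` is free, the quadratic map `sq` is the diagonal `v ↦ β v v` of a `k`-bilinear map `β`
(a triangular one with respect to an ordered basis); this stands in for the symmetric form
`½ [v, w]`, which need not exist when `2` is not invertible. The diagonal `q` of the base change
of `β` is a quadratic map on `R ⊗ g₁`, and expanding `β (∑ cᵢ ⊗ vᵢ) (∑ cⱼ ⊗ vⱼ)` gives the
defining formula. Both sides of each remaining identity of a 2-operation are quadratic in
`u ∈ R ⊗ g₁`, and a quadratic map on a base change is determined by its values at the elements
`1 ⊗ v`, where the identities are those of `sq` in `g`.
-/

open TensorProduct QuadraticMap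

theorem TensorProduct.exists_fin_sum_tmul {R M N : Type*} [CommSemiring R] [AddCommMonoid M]
    [AddCommMonoid N] [Module R M] [Module R N] (x : M ⊗[R] N) :
    ∃ (n : ℕ) (m : Fin n → M) (m' : Fin n → N), x = ∑ i, m i ⊗ₜ m' i := by
  obtain ⟨S, rfl⟩ := exists_finset x
  refine ⟨S.card, fun i => (S.equivFin.symm i).1.1, fun i => (S.equivFin.symm i).1.2, ?_⟩
  rw [← Finset.sum_coe_sort, ← S.equivFin.symm.sum_comp]

namespace QuadraticMap

theorem map_sum_of_linearOrder {R M N ι : Type*} [CommRing R] [AddCommGroup M] [AddCommGroup N]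
    [Module R M] [Module R N] [LinearOrder ι] (Q : QuadraticMap R M N) (s : Finset ι)
    (f : ι → M) :
    Q (∑ i ∈ s, f i) = ∑ i ∈ s, Q (f i) +
      ∑ p ∈ (s ×ˢ s).filter (fun p => p.1 < p.2), polar Q (f p.1) (f p.2) := by
  rw [Q.map_sum, Finset.sum_sym2_filter_not_isDiag]
  congr 1
  refine Finset.sum_congr ?_ fun p _ => rfl
  ext ⟨i, j⟩
  grind

variable {k M N : Type*} (R : Type*) [CommRing k] [CommRing R] [Algebra k R]
  [AddCommGroup M] [AddCommGroup N] [Module k M] [Module k N] [Module.Free k M]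

/-- By `baseChange_ext`, this does not depend on the chosen bilinear map with diagonal `Q`. -/
noncomputable def baseChange (Q : QuadraticMap k M N) : QuadraticMap R (R ⊗[k] M) (R ⊗[k] N) :=
  ((LinearMap.BilinMap.toQuadraticMap_surjective Q).choose.baseChange R).toQuadraticMap

variable {R}

theorem baseChange_tmul (Q : QuadraticMap k M N) (a : R) (m : M) :
    Q.baseChange R (a ⊗ₜ m) = (a * a) ⊗ₜ Q m := by
  conv_rhs => rw [← (LinearMap.BilinMap.toQuadraticMap_surjective Q).choose_spec]
  rfl

theorem polar_baseChange_tmul (Q : QuadraticMap k M N) (a a' : R) (m m' : M) :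
    polar (Q.baseChange R) (a ⊗ₜ m) (a' ⊗ₜ m') = (a * a') ⊗ₜ polar Q m m' := by
  conv_rhs => rw [← (LinearMap.BilinMap.toQuadraticMap_surjective Q).choose_spec]
  rw [baseChange, LinearMap.BilinMap.polar_toQuadraticMap, LinearMap.BilinMap.polar_toQuadraticMap,
    LinearMap.BilinMap.baseChange_tmul, LinearMap.BilinMap.baseChange_tmul, mul_comm a' a,
    tmul_add]

theorem baseChange_sum_tmul {ι : Type*} [LinearOrder ι] (Q : QuadraticMap k M N) (s : Finset ι)
    (a : ι → R) (m : ι → M) :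
    Q.baseChange R (∑ i ∈ s, a i ⊗ₜ m i) = ∑ i ∈ s, (a i * a i) ⊗ₜ Q (m i) +
      ∑ p ∈ (s ×ˢ s).filter (fun p => p.1 < p.2), (a p.1 * a p.2) ⊗ₜ polar Q (m p.1) (m p.2) := by
  simp only [map_sum_of_linearOrder, baseChange_tmul, polar_baseChange_tmul]

theorem apply_baseChange_eq_of_apply_eq {P L : Type*} [AddCommGroup P] [AddCommGroup L]
    [Module k P] [Module k L] (Q : QuadraticMap k M N) {b : N →ₗ[k] P →ₗ[k] P}
    {f : M →ₗ[k] P →ₗ[k] L} {g : M →ₗ[k] L →ₗ[k] P} (h : ∀ m x, b (Q m) x = g m (f m x))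
    {B : R ⊗[k] N →ₗ[R] R ⊗[k] P →ₗ[R] R ⊗[k] P} {F : R ⊗[k] M →ₗ[R] R ⊗[k] P →ₗ[R] R ⊗[k] L}
    {G : R ⊗[k] M →ₗ[R] R ⊗[k] L →ₗ[R] R ⊗[k] P}
    (hB : ∀ (a a' : R) n x, B (a ⊗ₜ n) (a' ⊗ₜ x) = (a * a') ⊗ₜ b n x)
    (hF : ∀ (a a' : R) m x, F (a ⊗ₜ m) (a' ⊗ₜ x) = (a * a') ⊗ₜ f m x)
    (hG : ∀ (a a' : R) m y, G (a ⊗ₜ m) (a' ⊗ₜ y) = (a * a') ⊗ₜ g m y)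
    (u : R ⊗[k] M) (x : R ⊗[k] P) :
    B (Q.baseChange R u) x = G u (F u x) := by
  let Φ : LinearMap.BilinMap R (R ⊗[k] M) (Module.End R (R ⊗[k] P)) :=
    ((LinearMap.llcomp R (R ⊗[k] P) (R ⊗[k] L) (R ⊗[k] P)).comp G).compl₂ F
  have key : B.compQuadraticMap (Q.baseChange R) = LinearMap.BilinMap.toQuadraticMap Φ :=
    baseChange_ext (N₁ := Module.End R (R ⊗[k] P)) fun m =>
      AlgebraTensorModule.ext fun a x => by simp [Φ, baseChange_tmul, hB, hF, hG, h]
  exact LinearMap.congr_fun congr($key u) x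

end QuadraticMap

theorem base_extension_two_operation_general
    (k : Type*) [CommRing k] (R : Type*) [CommRing R] [Algebra k R]
    (g0 g1 : Type*) [AddCommGroup g0] [AddCommGroup g1]
    [Module k g0] [Module k g1] [Module.Free k g1]
    (b00 : g0 →ₗ[k] g0 →ₗ[k] g0) (b10 : g1 →ₗ[k] g0 →ₗ[k] g1)
    (b11 : g1 →ₗ[k] g1 →ₗ[k] g0)
    (sq : g1 → g0)
    -- `sq` is a 2-operation on `g`:
    (hsq1 : ∀ (c : k) (v : g1), sq (c • v) = (c * c) • sq v)
    (hsq2 : ∀ v w : g1, sq (v + w) = sq v + b11 v w + sq w)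
    (hsq3 : ∀ (v : g1) (x : g0), b00 (sq v) x = b11 v (b10 v x))
    (hsq4 : ∀ v w : g1, - b10 w (sq v) = b10 v (b11 v w))
    -- the base-extended brackets on `g_R`:
    (B00 : R ⊗[k] g0 →ₗ[R] R ⊗[k] g0 →ₗ[R] R ⊗[k] g0)
    (B10 : R ⊗[k] g1 →ₗ[R] R ⊗[k] g0 →ₗ[R] R ⊗[k] g1)
    (B11 : R ⊗[k] g1 →ₗ[R] R ⊗[k] g1 →ₗ[R] R ⊗[k] g0)
    (hB00 : ∀ (c d : R) (x y : g0),
      B00 (c ⊗ₜ[k] x) (d ⊗ₜ[k] y) = (c * d) ⊗ₜ[k] b00 x y)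
    (hB10 : ∀ (c d : R) (v : g1) (x : g0),
      B10 (c ⊗ₜ[k] v) (d ⊗ₜ[k] x) = (c * d) ⊗ₜ[k] b10 v x)
    (hB11 : ∀ (c d : R) (v w : g1),
      B11 (c ⊗ₜ[k] v) (d ⊗ₜ[k] w) = (c * d) ⊗ₜ[k] b11 v w) :
    ∃ q : R ⊗[k] g1 → R ⊗[k] g0,
      -- the defining formula, for every finite presentation
      (∀ (n : ℕ) (c : Fin n → R) (vv : Fin n → g1),
        q (∑ i, (c i) ⊗ₜ[k] (vv i)) =
          (∑ i, (c i * c i) ⊗ₜ[k] sq (vv i)) +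
          ∑ p ∈ Finset.univ.filter (fun p : Fin n × Fin n => p.1 < p.2),
            (c p.1 * c p.2) ⊗ₜ[k] b11 (vv p.1) (vv p.2)) ∧
      -- uniqueness
      (∀ q' : R ⊗[k] g1 → R ⊗[k] g0,
        (∀ (n : ℕ) (c : Fin n → R) (vv : Fin n → g1),
          q' (∑ i, (c i) ⊗ₜ[k] (vv i)) =
            (∑ i, (c i * c i) ⊗ₜ[k] sq (vv i)) +
            ∑ p ∈ Finset.univ.filter (fun p : Fin n × Fin n => p.1 < p.2),
              (c p.1 * c p.2) ⊗ₜ[k] b11 (vv p.1) (vv p.2)) →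
        q' = q) ∧
      -- `q` is a 2-operation on `g_R`:
      (∀ (r : R) (u : R ⊗[k] g1), q (r • u) = (r * r) • q u) ∧
      (∀ u w : R ⊗[k] g1, q (u + w) = q u + B11 u w + q w) ∧
      (∀ (u : R ⊗[k] g1) (x : R ⊗[k] g0), B00 (q u) x = B11 u (B10 u x)) ∧
      (∀ u w : R ⊗[k] g1, - B10 w (q u) = B10 u (B11 u w)) := by
  obtain ⟨Q, rfl⟩ : ∃ Q : QuadraticMap k g1 g0, ⇑Q = sq :=
    ⟨⟨sq, hsq1, ⟨b11, fun v w => by rw [hsq2]; abel⟩⟩, rfl⟩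
  have hpolar (v w : g1) : polar Q v w = b11 v w := by
    rw [polar, hsq2]
    abel
  have hformula (n : ℕ) (c : Fin n → R) (vv : Fin n → g1) :
      Q.baseChange R (∑ i, c i ⊗ₜ vv i) = (∑ i, (c i * c i) ⊗ₜ Q (vv i)) +
        ∑ p ∈ Finset.univ.filter (fun p : Fin n × Fin n => p.1 < p.2),
          (c p.1 * c p.2) ⊗ₜ b11 (vv p.1) (vv p.2) := by
    simp only [Q.baseChange_sum_tmul, Finset.univ_product_univ, hpolar]
  have hpolarBilin : polarBilin (Q.baseChange R) = B11 :=
    AlgebraTensorModule.ext fun c v => AlgebraTensorModule.ext fun d w => by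
      rw [polarBilin_apply_apply, polar_baseChange_tmul, hpolar, hB11]
  refine ⟨Q.baseChange R, hformula, fun q' hq' => funext fun u => ?_, (Q.baseChange R).map_smul,
    fun u w => ?_, Q.apply_baseChange_eq_of_apply_eq hsq3 hB00 hB10 hB11, fun u w => ?_⟩
  · obtain ⟨n, c, vv, rfl⟩ := exists_fin_sum_tmul u
    rw [hq', hformula]
  · rw [QuadraticMap.map_add (Q.baseChange R), ← hpolarBilin, polarBilin_apply_apply]
    abel
  -- `-[w, v^⟨2⟩]` is bilinear in `(v^⟨2⟩, w)`, so this is the same transfer as for `hsq3`.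
  · simpa using Q.apply_baseChange_eq_of_apply_eq (b := b10.flip.compr₂ (-LinearMap.id))
      (B := B10.flip.compr₂ (-LinearMap.id)) (fun v w => by simpa using hsq4 v w)
      (fun c d x v => by simp [hB10, mul_comm c d, tmul_neg]) hB11 hB10 u w

theorem base_extension_two_operation
    (k : Type*) [CommRing k] (R : Type*) [CommRing R] [Algebra k R]
    (g0 g1 : Type*) [AddCommGroup g0] [AddCommGroup g1]
    [Module k g0] [Module k g1] [Module.Free k g1]
    (b00 : g0 →ₗ[k] g0 →ₗ[k] g0) (b10 : g1 →ₗ[k] g0 →ₗ[k] g1)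
    (b11 : g1 →ₗ[k] g1 →ₗ[k] g0)
    (hb11symm : ∀ v w : g1, b11 v w = b11 w v)
    (sq : g1 → g0)
    -- `sq` is a 2-operation on `g`:
    (hsq1 : ∀ (c : k) (v : g1), sq (c • v) = (c * c) • sq v)
    (hsq2 : ∀ v w : g1, sq (v + w) = sq v + b11 v w + sq w)
    (hsq3 : ∀ (v : g1) (x : g0), b00 (sq v) x = b11 v (b10 v x))
    (hsq4 : ∀ v w : g1, - b10 w (sq v) = b10 v (b11 v w))
    -- the base-extended brackets on `g_R`:
    (B00 : R ⊗[k] g0 →ₗ[R] R ⊗[k] g0 →ₗ[R] R ⊗[k] g0)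
    (B10 : R ⊗[k] g1 →ₗ[R] R ⊗[k] g0 →ₗ[R] R ⊗[k] g1)
    (B11 : R ⊗[k] g1 →ₗ[R] R ⊗[k] g1 →ₗ[R] R ⊗[k] g0)
    (hB00 : ∀ (c d : R) (x y : g0),
      B00 (c ⊗ₜ[k] x) (d ⊗ₜ[k] y) = (c * d) ⊗ₜ[k] b00 x y)
    (hB10 : ∀ (c d : R) (v : g1) (x : g0),
      B10 (c ⊗ₜ[k] v) (d ⊗ₜ[k] x) = (c * d) ⊗ₜ[k] b10 v x)
    (hB11 : ∀ (c d : R) (v w : g1),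
      B11 (c ⊗ₜ[k] v) (d ⊗ₜ[k] w) = (c * d) ⊗ₜ[k] b11 v w) :
    ∃ q : R ⊗[k] g1 → R ⊗[k] g0,
      -- the defining formula, for every finite presentation
      (∀ (n : ℕ) (c : Fin n → R) (vv : Fin n → g1),
        q (∑ i, (c i) ⊗ₜ[k] (vv i)) =
          (∑ i, (c i * c i) ⊗ₜ[k] sq (vv i)) +
          ∑ p ∈ Finset.univ.filter (fun p : Fin n × Fin n => p.1 < p.2),
            (c p.1 * c p.2) ⊗ₜ[k] b11 (vv p.1) (vv p.2)) ∧
      -- uniqueness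
      (∀ q' : R ⊗[k] g1 → R ⊗[k] g0,
        (∀ (n : ℕ) (c : Fin n → R) (vv : Fin n → g1),
          q' (∑ i, (c i) ⊗ₜ[k] (vv i)) =
            (∑ i, (c i * c i) ⊗ₜ[k] sq (vv i)) +
            ∑ p ∈ Finset.univ.filter (fun p : Fin n × Fin n => p.1 < p.2),
              (c p.1 * c p.2) ⊗ₜ[k] b11 (vv p.1) (vv p.2)) →
        q' = q) ∧
      -- `q` is a 2-operation on `g_R`:
      (∀ (r : R) (u : R ⊗[k] g1), q (r • u) = (r * r) • q u) ∧
      (∀ u w : R ⊗[k] g1, q (u + w) = q u + B11 u w + q w) ∧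
      (∀ (u : R ⊗[k] g1) (x : R ⊗[k] g0), B00 (q u) x = B11 u (B10 u x)) ∧
      (∀ u w : R ⊗[k] g1, - B10 w (q u) = B10 u (B11 u w)) :=
  base_extension_two_operation_general k R g0 g1 b00 b10 b11 sq hsq1 hsq2 hsq3 hsq4 B00 B10 B11 hB00
    hB10 hB11
end

section
/- Let k be a 2-torsion-free commutative ring and g a Lie superalgebra over k with g₀ k-flat and g₁ k-free. Then g admits a 2-operation if and only if for every v ∈ g₁ the element [v,v] is 2-divisible in g₀; and in that case the assignment v^⟨2⟩ := (1/2)[v,v] (the unique element whose double is [v,v]) defines a 2-operation on g, and it is the unique 2-operation on g. -/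
/-!
STATEMENT 12 (Remark 3.7 (1) = [MS, Lemma A.2]).  Let `k` be a
2-torsion-free commutative ring and `g = g₀ ⊕ g₁` a Lie superalgebra over
`k` with `g₀` `k`-flat and `g₁` `k`-free.  Then `g` admits a 2-operation
if and only if `[v,v]` is 2-divisible in `g₀` for every `v ∈ g₁`; in that
case `v^⟨2⟩ := (1/2)[v,v]` defines a 2-operation, every 2-operation `sq`
satisfies `2 • sq v = [v,v]` (i.e. `sq v` is the unique half of `[v,v]`),
and the 2-operation is unique.

The super-bracket is described by its components `b00` (`[x,y]`),
`b10` (`[v,x]`), `b11` (`[v,w]`).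
-/

/-- `sq` is a 2-operation on the Lie superalgebra with bracket components
`b00`, `b10`, `b11`. -/
def IsTwoOperation {k : Type*} [CommRing k] {g0 g1 : Type*}
    [AddCommGroup g0] [AddCommGroup g1] [Module k g0] [Module k g1]
    (b00 : g0 →ₗ[k] g0 →ₗ[k] g0) (b10 : g1 →ₗ[k] g0 →ₗ[k] g1)
    (b11 : g1 →ₗ[k] g1 →ₗ[k] g0) (sq : g1 → g0) : Prop :=
  (∀ (c : k) (v : g1), sq (c • v) = (c * c) • sq v) ∧
  (∀ v w : g1, sq (v + w) = sq v + b11 v w + sq w) ∧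
  (∀ (v : g1) (x : g0), b00 (sq v) x = b11 v (b10 v x)) ∧
  (∀ v w : g1, - b10 w (sq v) = b10 v (b11 v w))


lemma flat_two_regular (k : Type*) [CommRing k] (M : Type*) [AddCommGroup M]
    [Module k M] [Module.Flat k M] (h2 : Function.Injective (fun c : k => 2 * c)) :
    Function.Injective (fun x : M => (2:k) • x) := by
  have hk : IsSMulRegular k (2:k) := by
    intro a b hab
    exact h2 (by simpa [smul_eq_mul] using hab)
  exact ((TensorProduct.lid k M).isSMulRegular_congr (2:k)).mp (hk.rTensor M)

theorem two_operation_iff_two_divisible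
    (k : Type*) [CommRing k]
    -- `k` is 2-torsion free
    (h2 : Function.Injective (fun c : k => 2 * c))
    (g0 g1 : Type*) [AddCommGroup g0] [AddCommGroup g1]
    [Module k g0] [Module k g1]
    [Module.Flat k g0] [Module.Free k g1]
    (b00 : g0 →ₗ[k] g0 →ₗ[k] g0) (b10 : g1 →ₗ[k] g0 →ₗ[k] g1)
    (b11 : g1 →ₗ[k] g1 →ₗ[k] g0)
    -- Lie superalgebra axioms (the relevant ones)
    (hb00anti : ∀ x y : g0, b00 x y = - b00 y x)
    (hb11symm : ∀ v w : g1, b11 v w = b11 w v)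
    (hJ1 : ∀ (v w : g1) (x : g0),
      - b11 (b10 v x) w + b00 (b11 v w) x - b11 (b10 w x) v = 0)
    (hJ2 : ∀ u v w : g1,
      b10 u (b11 v w) + b10 v (b11 w u) + b10 w (b11 u v) = 0) :
    ((∃ sq : g1 → g0, IsTwoOperation b00 b10 b11 sq) ↔
      (∀ v : g1, ∃ u : g0, b11 v v = 2 • u)) ∧
    (∀ sq : g1 → g0, IsTwoOperation b00 b10 b11 sq →
      ∀ v : g1, 2 • sq v = b11 v v) ∧
    (∀ sq sq' : g1 → g0, IsTwoOperation b00 b10 b11 sq →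
      IsTwoOperation b00 b10 b11 sq' → sq = sq') := by
  have hreg0 : Function.Injective (fun x : g0 => (2:k) • x) :=
    flat_two_regular k g0 h2
  have hreg1 : Function.Injective (fun x : g1 => (2:k) • x) :=
    flat_two_regular k g1 h2
  have hns0 : ∀ u : g0, (2:ℕ) • u = (2:k) • u := by
    intro u; rw [two_smul, two_smul]
  have hkey : ∀ sq : g1 → g0, IsTwoOperation b00 b10 b11 sq →
      ∀ v : g1, (2:k) • sq v = b11 v v := by
    intro sq ⟨hsm, hadd, _, _⟩ v
    have h1 : sq (v + v) = sq v + b11 v v + sq v := hadd v v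
    have h2' : sq (v + v) = (4:k) • sq v := by
      rw [← two_smul k v, hsm]; norm_num
    have heq : (4:k) • sq v = (2:k) • sq v + b11 v v := by
      rw [← h2', h1, two_smul]; abel
    have h4 : (4:k) • sq v = (2:k) • sq v + (2:k) • sq v := by
      rw [show (4:k) = 2 + 2 by norm_num, add_smul]
    rw [h4] at heq
    exact add_left_cancel heq
  refine ⟨⟨fun ⟨sq, hsq⟩ v => ⟨sq v, by rw [hns0]; exact (hkey sq hsq v).symm⟩, ?_⟩,
    fun sq hsq v => by rw [hns0]; exact hkey sq hsq v,
    fun sq sq' hsq hsq' => funext fun v => hreg0 (by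
      show (2:k) • sq v = (2:k) • sq' v
      rw [hkey sq hsq v, hkey sq' hsq' v])⟩
  intro hdiv
  choose u hu using hdiv
  have hu' : ∀ v : g1, (2:k) • u v = b11 v v := by
    intro v; rw [← hns0, ← hu]
  refine ⟨u, ?_, ?_, ?_, ?_⟩
  · intro c v
    apply hreg0
    show (2:k) • u (c • v) = (2:k) • ((c * c) • u v)
    rw [hu']
    simp only [map_smul, LinearMap.smul_apply]
    rw [← hu' v]
    module
  · intro v w
    apply hreg0
    show (2:k) • u (v + w) = (2:k) • (u v + b11 v w + u w)
    rw [hu']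
    simp only [map_add, LinearMap.add_apply]
    rw [hb11symm w v, ← hu' v, ← hu' w]
    module
  · intro v x
    apply hreg0
    show (2:k) • b00 (u v) x = (2:k) • b11 v (b10 v x)
    have step : b00 (b11 v v) x = (2:k) • b11 v (b10 v x) := by
      have h : b00 (b11 v v) x - ((2:k) • b11 v (b10 v x)) = 0 := by
        rw [two_smul, hb11symm v (b10 v x), ← hJ1 v v x]; abel
      exact sub_eq_zero.mp h
    calc (2:k) • b00 (u v) x = b00 ((2:k) • u v) x := by
          rw [map_smul, LinearMap.smul_apply]
      _ = b00 (b11 v v) x := by rw [hu']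
      _ = (2:k) • b11 v (b10 v x) := step
  · intro v w
    apply hreg1
    show (2:k) • (- b10 w (u v)) = (2:k) • b10 v (b11 v w)
    have step : - b10 w (b11 v v) = (2:k) • b10 v (b11 v w) := by
      have h' := hJ2 v v w
      rw [hb11symm w v] at h'
      have h : - b10 w (b11 v v) - ((2:k) • b10 v (b11 v w)) =
          -(b10 v (b11 v w) + b10 v (b11 v w) + b10 w (b11 v v)) := by
        rw [two_smul]; abel
      rw [h', neg_zero] at h
      exact sub_eq_zero.mp h
    calc (2:k) • (- b10 w (u v)) = - b10 w ((2:k) • u v) := by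
          rw [map_smul, smul_neg]
      _ = - b10 w (b11 v v) := by rw [hu']
      _ = (2:k) • b10 v (b11 v w) := step
end

section
/- Let O be a commutative Hopf algebra over a commutative ring k, regarded as trivially graded. Let A be a commutative ℕ-graded algebra object in the symmetric category of ℕ-graded k-modules with super-symmetry (sign (−1)^{mn} on components of degrees m,n), equipped with a compatible graded left O-comodule algebra structure such that A(0) = O. Let B = A/O⁺A with projection π. Then the map A → O ⊗ B, a ↦ a₍₋₁₎ ⊗ π(a₍₀₎), induced by the comodule structure a ↦ a₍₋₁₎⊗a₍₀₎, is an isomorphism of graded left O-comodule algebras. In particular, the functor B ↦ O ⊗ B is an equivalence from connected commutative graded algebras (B(0) = k) to such neutrally graded O-comodule algebras. -/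
/-!
`A` is a left Hopf module over `O` (via `φ` and `ρ`), and the argument is the fundamental
theorem of Hopf modules. The map `P x = φ (S x₍₋₁₎) x₍₀₎` satisfies `x = φ (x₍₋₁₎) P (x₍₀₎)`
and `(id ⊗ π) (ρ (P x)) = 1 ⊗ π x`; since `O` is commutative, `S` is multiplicative, which gives
`P (φ o * a) = ε o • P a`, so `P` kills `O⁺A = ker π`. Hence `o ⊗ π x ↦ φ o * P x` is a
well-defined two-sided inverse of `a ↦ a₍₋₁₎ ⊗ π (a₍₀₎)`, which is an algebra map because
`ρ` and `π` are.
-/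

open TensorProduct Coalgebra HopfAlgebra

noncomputable section

namespace HopfModule

variable {k O A B : Type*}

section CommSemiring

variable [CommSemiring k]

theorem lTensor_toLinearMap_mul [Semiring O] [Algebra k O] [Semiring A] [Algebra k A]
    [Semiring B] [Algebra k B] (π : A →ₐ[k] B) (u v : O ⊗[k] A) :
    π.toLinearMap.lTensor O (u * v) = π.toLinearMap.lTensor O u * π.toLinearMap.lTensor O v :=
  map_mul (Algebra.TensorProduct.lTensor O π) u v

theorem lTensor_coaction_algHom [Semiring O] [Bialgebra k O] [Semiring A] [Algebra k A]
    [Semiring B] [Algebra k B] {φ : O →ₐ[k] A} {ρ : A →ₗ[k] O ⊗[k] A}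
    (hρφ : ∀ o : O, ρ (φ o) = map .id φ.toLinearMap (comul (R := k) o))
    {π : A →ₐ[k] B} (hπφ : ∀ o : O, π (φ o) = algebraMap k B (counit (R := k) o)) (o : O) :
    π.toLinearMap.lTensor O (ρ (φ o)) = o ⊗ₜ 1 := by
  have hπφ' : π.toLinearMap ∘ₗ φ.toLinearMap = Algebra.linearMap k B ∘ₗ counit := by
    ext o; exact hπφ o
  rw [hρφ, LinearMap.lTensor_map, hπφ']
  change (Algebra.linearMap k B ∘ₗ counit).lTensor O (comul o) = _
  rw [LinearMap.lTensor_comp_apply, lTensor_counit_comul]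
  simp

section Hopf

variable [Semiring O] [HopfAlgebra k O] [Semiring A] [Algebra k A] [Semiring B] [Algebra k B]

def antipodeMul (φ : O →ₐ[k] A) : O ⊗[k] A →ₗ[k] A :=
  LinearMap.mul' k A ∘ₗ map (φ.toLinearMap ∘ₗ antipode k) .id

@[simp]
theorem antipodeMul_tmul (φ : O →ₐ[k] A) (o : O) (a : A) :
    antipodeMul φ (o ⊗ₜ a) = φ (antipode k o) * a := rfl

def coinvProj (φ : O →ₐ[k] A) (ρ : A →ₗ[k] O ⊗[k] A) : A →ₗ[k] A := antipodeMul φ ∘ₗ ρ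

theorem mul'_map_coinvProj_coaction {φ : O →ₐ[k] A} {ρ : A →ₗ[k] O ⊗[k] A}
    (hρcounit : ∀ a : A, counit.rTensor A (ρ a) = (1 : k) ⊗ₜ a)
    (hρcoassoc : ∀ a : A, TensorProduct.assoc k O O A (comul.rTensor A (ρ a)) = ρ.lTensor O (ρ a))
    (x : A) : LinearMap.mul' k A (map φ.toLinearMap (coinvProj φ ρ) (ρ x)) = x := by
  have hassoc : LinearMap.mul' k A ∘ₗ map φ.toLinearMap (antipodeMul φ) ∘ₗ
      (TensorProduct.assoc k O O A).toLinearMap = LinearMap.mul' k A ∘ₗ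
        (φ.toLinearMap ∘ₗ LinearMap.mul' k O ∘ₗ (antipode k).lTensor O).rTensor A := by
    ext o p a; simp [mul_assoc]
  have hantipode : (φ.toLinearMap ∘ₗ LinearMap.mul' k O ∘ₗ (antipode k).lTensor O) ∘ₗ comul =
      (φ.toLinearMap ∘ₗ Algebra.linearMap k O) ∘ₗ counit := by
    simp only [LinearMap.comp_assoc, mul_antipode_lTensor_comul]
  calc LinearMap.mul' k A (map φ.toLinearMap (coinvProj φ ρ) (ρ x))
      = LinearMap.mul' k A (map φ.toLinearMap (antipodeMul φ)
          (TensorProduct.assoc k O O A (comul.rTensor A (ρ x)))) := by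
        rw [coinvProj, ← LinearMap.map_lTensor, hρcoassoc]
    _ = LinearMap.mul' k A ((φ.toLinearMap ∘ₗ Algebra.linearMap k O).rTensor A
          (counit.rTensor A (ρ x))) := by
        rw [← LinearMap.rTensor_comp_apply, ← hantipode, LinearMap.rTensor_comp_apply]
        exact LinearMap.congr_fun hassoc _
    _ = x := by rw [hρcounit]; simp

theorem lTensor_coaction_coinvProj {φ : O →ₐ[k] A} {ρ : A →ₗ[k] O ⊗[k] A}
    (hρmul : ∀ a b : A, ρ (a * b) = ρ a * ρ b)
    (hρcounit : ∀ a : A, counit.rTensor A (ρ a) = (1 : k) ⊗ₜ a)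
    (hρcoassoc : ∀ a : A, TensorProduct.assoc k O O A (comul.rTensor A (ρ a)) = ρ.lTensor O (ρ a))
    {π : A →ₐ[k] B} (hπρφ : ∀ o : O, π.toLinearMap.lTensor O (ρ (φ o)) = o ⊗ₜ 1) (x : A) :
    π.toLinearMap.lTensor O (ρ (coinvProj φ ρ x)) = 1 ⊗ₜ π x := by
  let Λ : O ⊗[k] (O ⊗[k] A) →ₗ[k] O ⊗[k] B := LinearMap.mul' k (O ⊗[k] B) ∘ₗ
    map ((Algebra.TensorProduct.includeLeft : O →ₐ[k] O ⊗[k] B).toLinearMap ∘ₗ antipode k)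
      (π.toLinearMap.lTensor O)
  have hΛ : π.toLinearMap.lTensor O ∘ₗ ρ ∘ₗ antipodeMul φ = Λ ∘ₗ ρ.lTensor O := by
    ext o a
    change π.toLinearMap.lTensor O (ρ (φ (antipode k o) * a)) =
      (antipode k o ⊗ₜ 1) * π.toLinearMap.lTensor O (ρ a)
    rw [hρmul, lTensor_toLinearMap_mul, hπρφ]
  have hassoc : Λ ∘ₗ (TensorProduct.assoc k O O A).toLinearMap =
      map (LinearMap.mul' k O ∘ₗ (antipode k).rTensor O) π.toLinearMap := by
    ext o p a; simp [Λ]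
  have hantipode : (LinearMap.mul' k O ∘ₗ (antipode k).rTensor O) ∘ₗ comul =
      Algebra.linearMap k O ∘ₗ counit := by
    simp only [LinearMap.comp_assoc, mul_antipode_rTensor_comul]
  calc π.toLinearMap.lTensor O (ρ (coinvProj φ ρ x)) = Λ (ρ.lTensor O (ρ x)) :=
        LinearMap.congr_fun hΛ (ρ x)
    _ = map (LinearMap.mul' k O ∘ₗ (antipode k).rTensor O) π.toLinearMap
          (comul.rTensor A (ρ x)) := by
        rw [← hρcoassoc]; exact LinearMap.congr_fun hassoc _
    _ = map (Algebra.linearMap k O) π.toLinearMap (counit.rTensor A (ρ x)) := by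
        rw [LinearMap.map_rTensor, hantipode, LinearMap.map_rTensor]
    _ = 1 ⊗ₜ π x := by rw [hρcounit]; simp

theorem surjective_lTensor_comp_coaction {φ : O →ₐ[k] A} {ρ : A →ₗ[k] O ⊗[k] A}
    (hρmul : ∀ a b : A, ρ (a * b) = ρ a * ρ b)
    (hρcounit : ∀ a : A, counit.rTensor A (ρ a) = (1 : k) ⊗ₜ a)
    (hρcoassoc : ∀ a : A, TensorProduct.assoc k O O A (comul.rTensor A (ρ a)) = ρ.lTensor O (ρ a))
    {π : A →ₐ[k] B} (hπ : Function.Surjective π)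
    (hπρφ : ∀ o : O, π.toLinearMap.lTensor O (ρ (φ o)) = o ⊗ₜ 1) :
    Function.Surjective (π.toLinearMap.lTensor O ∘ₗ ρ) := by
  rw [← LinearMap.range_eq_top, eq_top_iff, ← TensorProduct.span_tmul_eq_top, Submodule.span_le]
  rintro _ ⟨o, b, rfl⟩
  obtain ⟨x, rfl⟩ := hπ b
  refine ⟨φ o * coinvProj φ ρ x, ?_⟩
  rw [LinearMap.comp_apply, hρmul, lTensor_toLinearMap_mul, hπρφ,
    lTensor_coaction_coinvProj hρmul hρcounit hρcoassoc hπρφ,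
    Algebra.TensorProduct.tmul_mul_tmul, mul_one, one_mul]

end Hopf

section CommHopf

variable [CommSemiring O] [HopfAlgebra k O] [Semiring A] [Algebra k A]

theorem antipodeMul_map_mul (φ : O →ₐ[k] A) (u : O ⊗[k] O) (t : O ⊗[k] A) :
    antipodeMul φ (map .id φ.toLinearMap u * t) =
      φ (LinearMap.mul' k O ((antipode k).rTensor O u)) * antipodeMul φ t := by
  induction u using TensorProduct.induction_on with
  | zero => simp
  | add u u' hu hu' => simp [add_mul, hu, hu']
  | tmul p q =>
    induction t using TensorProduct.induction_on with
    | zero => simp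
    | add t t' ht ht' => rw [mul_add, map_add, ht, ht', map_add, mul_add]
    | tmul r b =>
      simp only [map_tmul, Algebra.TensorProduct.tmul_mul_tmul, antipodeMul_tmul,
        LinearMap.rTensor_tmul, LinearMap.mul'_apply, LinearMap.id_apply,
        AlgHom.toLinearMap_apply, antipode_mul_distrib]
      rw [← mul_assoc, ← mul_assoc, ← map_mul φ, ← map_mul φ, mul_right_comm (antipode k p)]

theorem coinvProj_algHom_mul {φ : O →ₐ[k] A} {ρ : A →ₗ[k] O ⊗[k] A}
    (hρmul : ∀ a b : A, ρ (a * b) = ρ a * ρ b)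
    (hρφ : ∀ o : O, ρ (φ o) = map .id φ.toLinearMap (comul (R := k) o)) (o : O) (a : A) :
    coinvProj φ ρ (φ o * a) = counit (R := k) o • coinvProj φ ρ a := by
  rw [coinvProj, LinearMap.comp_apply, hρmul, hρφ, antipodeMul_map_mul,
    mul_antipode_rTensor_comul_apply, AlgHom.commutes, ← Algebra.smul_def]
  rfl

theorem span_augmentation_mul_le_ker_coinvProj {φ : O →ₐ[k] A} {ρ : A →ₗ[k] O ⊗[k] A}
    (hρmul : ∀ a b : A, ρ (a * b) = ρ a * ρ b)
    (hρφ : ∀ o : O, ρ (φ o) = map .id φ.toLinearMap (comul (R := k) o)) :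
    Submodule.span k {y : A | ∃ (o : O) (a : A), counit (R := k) o = 0 ∧ y = φ o * a} ≤
      LinearMap.ker (coinvProj φ ρ) :=
  Submodule.span_le.2 <| by
    rintro _ ⟨o, a, ho, rfl⟩
    simp [coinvProj_algHom_mul hρmul hρφ, ho]

end CommHopf

end CommSemiring

section CommRing

variable [CommRing k]

theorem algHom_apply_eq_algebraMap_counit [Ring O] [Bialgebra k O] [Ring B] [Algebra k B]
    {ψ : O →ₐ[k] B} (hψ : ∀ o : O, counit (R := k) o = 0 → ψ o = 0) (o : O) :
    ψ o = algebraMap k B (counit (R := k) o) := by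
  have h := hψ (o - algebraMap k O (counit (R := k) o)) (by simp)
  rwa [map_sub, AlgHom.commutes, sub_eq_zero] at h

theorem injective_lTensor_comp_coaction [Ring O] [HopfAlgebra k O] [Ring A] [Algebra k A]
    [AddCommGroup B] [Module k B] {φ : O →ₐ[k] A} {ρ : A →ₗ[k] O ⊗[k] A}
    (hρcounit : ∀ a : A, counit.rTensor A (ρ a) = (1 : k) ⊗ₜ a)
    (hρcoassoc : ∀ a : A, TensorProduct.assoc k O O A (comul.rTensor A (ρ a)) = ρ.lTensor O (ρ a))
    {π : A →ₗ[k] B} (hπ : Function.Surjective π)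
    (hker : LinearMap.ker π ≤ LinearMap.ker (coinvProj φ ρ)) :
    Function.Injective (π.lTensor O ∘ₗ ρ) := by
  refine (injective_iff_map_eq_zero _).2 fun x hx => ?_
  obtain ⟨t, ht⟩ := (lTensor_exact O (LinearMap.exact_subtype_ker_map π) hπ (ρ x)).1 hx
  have hP : coinvProj φ ρ ∘ₗ (LinearMap.ker π).subtype = 0 := by
    ext y; exact hker y.2
  rw [← mul'_map_coinvProj_coaction hρcounit hρcoassoc x, ← ht, LinearMap.map_lTensor, hP]
  simp

end CommRing

end HopfModule

theorem neutrally_graded_comodule_algebra_decomposition_general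
    (k : Type*) [CommRing k]
    (O : Type*) [CommRing O] [HopfAlgebra k O]
    (A : Type*) [Ring A] [Algebra k A]
    -- `A(0) = O`
    (φ : O →ₐ[k] A)
    -- the left `O`-comodule algebra structure on `A`
    (ρ : A →ₗ[k] O ⊗[k] A)
    (hρ1 : ρ 1 = 1 ⊗ₜ[k] 1)
    (hρmul : ∀ a b : A, ρ (a * b) = ρ a * ρ b)
    (hρcounit : ∀ a : A,
      TensorProduct.lid k A
        (TensorProduct.map (Coalgebra.counit (R := k) (A := O))
          LinearMap.id (ρ a)) = a)
    (hρcoassoc : ∀ a : A,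
      TensorProduct.map (Coalgebra.comul (R := k) (A := O))
        LinearMap.id (ρ a) =
      (TensorProduct.assoc k O O A).symm
        (TensorProduct.map LinearMap.id ρ (ρ a)))
    -- on `A(0) = O` the coaction is the regular one
    (hρφ : ∀ o : O, ρ (φ o) =
      TensorProduct.map LinearMap.id φ.toLinearMap
        (Coalgebra.comul (R := k) o))
    -- `B = A / O⁺A`
    (B : Type*) [Ring B] [Algebra k B]
    (π : A →ₐ[k] B) (hπsurj : Function.Surjective π)
    (hπker : ∀ x : A, π x = 0 ↔ x ∈ Submodule.span k
      {y : A | ∃ (o : O) (a : A),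
        Coalgebra.counit (R := k) o = (0 : k) ∧ y = φ o * a}) :
    Function.Bijective
      ((TensorProduct.map LinearMap.id π.toLinearMap) ∘ₗ ρ) ∧
    (∀ a b : A,
      ((TensorProduct.map LinearMap.id π.toLinearMap) ∘ₗ ρ) (a * b) =
      ((TensorProduct.map LinearMap.id π.toLinearMap) ∘ₗ ρ) a *
      ((TensorProduct.map LinearMap.id π.toLinearMap) ∘ₗ ρ) b) ∧
    ((TensorProduct.map LinearMap.id π.toLinearMap) ∘ₗ ρ) 1 = 1 := by
  have hcounit : ∀ a : A, counit.rTensor A (ρ a) = (1 : k) ⊗ₜ a := fun a =>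
    (TensorProduct.lid k A).injective <| (hρcounit a).trans (by simp)
  have hcoassoc : ∀ a : A,
      TensorProduct.assoc k O O A (comul.rTensor A (ρ a)) = ρ.lTensor O (ρ a) := fun a =>
    (LinearEquiv.eq_symm_apply _).1 (hρcoassoc a)
  have hπφ : ∀ o : O, π (φ o) = algebraMap k B (counit (R := k) o) :=
    HopfModule.algHom_apply_eq_algebraMap_counit (ψ := π.comp φ) fun o ho =>
      (hπker _).2 (Submodule.subset_span ⟨o, 1, ho, (mul_one _).symm⟩)
  have hπρφ := HopfModule.lTensor_coaction_algHom hρφ hπφ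
  have hker : LinearMap.ker π.toLinearMap ≤ LinearMap.ker (HopfModule.coinvProj φ ρ) :=
    fun x hx => HopfModule.span_augmentation_mul_le_ker_coinvProj hρmul hρφ ((hπker x).1 hx)
  let Φ : A →ₐ[k] O ⊗[k] B :=
    (Algebra.TensorProduct.lTensor O π).comp (AlgHom.ofLinearMap ρ hρ1 hρmul)
  exact ⟨⟨HopfModule.injective_lTensor_comp_coaction hcounit hcoassoc hπsurj hker,
    HopfModule.surjective_lTensor_comp_coaction hρmul hcounit hcoassoc hπsurj hπρφ⟩,
    map_mul Φ, map_one Φ⟩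

theorem neutrally_graded_comodule_algebra_decomposition
    (k : Type*) [CommRing k]
    (O : Type*) [CommRing O] [HopfAlgebra k O]
    (A : Type*) [Ring A] [Algebra k A]
    (𝒜 : ℕ → Submodule k A) [DirectSum.Decomposition 𝒜]
    (hone : (1 : A) ∈ 𝒜 0)
    (hmul : ∀ (m n : ℕ) (a b : A), a ∈ 𝒜 m → b ∈ 𝒜 n → a * b ∈ 𝒜 (m + n))
    -- graded (super) commutativity of `A`
    (hcomm : ∀ (m n : ℕ) (a b : A), a ∈ 𝒜 m → b ∈ 𝒜 n →
      a * b = ((-1 : k) ^ (m * n)) • (b * a))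
    -- `A(0) = O`
    (φ : O →ₐ[k] A) (hφinj : Function.Injective φ)
    (hφ0 : ∀ o : O, φ o ∈ 𝒜 0)
    (h0φ : ∀ a ∈ 𝒜 0, ∃ o : O, φ o = a)
    -- the left `O`-comodule algebra structure on `A`
    (ρ : A →ₗ[k] O ⊗[k] A)
    (hρ1 : ρ 1 = 1 ⊗ₜ[k] 1)
    (hρmul : ∀ a b : A, ρ (a * b) = ρ a * ρ b)
    (hρcounit : ∀ a : A,
      TensorProduct.lid k A
        (TensorProduct.map (Coalgebra.counit (R := k) (A := O))
          LinearMap.id (ρ a)) = a)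
    (hρcoassoc : ∀ a : A,
      TensorProduct.map (Coalgebra.comul (R := k) (A := O))
        LinearMap.id (ρ a) =
      (TensorProduct.assoc k O O A).symm
        (TensorProduct.map LinearMap.id ρ (ρ a)))
    -- the comodule structure is graded
    (hρgr : ∀ (n : ℕ) (a : A), a ∈ 𝒜 n →
      ρ a ∈ LinearMap.range
        (TensorProduct.map (LinearMap.id (R := k) (M := O)) (𝒜 n).subtype))
    -- on `A(0) = O` the coaction is the regular one
    (hρφ : ∀ o : O, ρ (φ o) =
      TensorProduct.map LinearMap.id φ.toLinearMap
        (Coalgebra.comul (R := k) o))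
    -- `B = A / O⁺A`
    (B : Type*) [Ring B] [Algebra k B]
    (π : A →ₐ[k] B) (hπsurj : Function.Surjective π)
    (hπker : ∀ x : A, π x = 0 ↔ x ∈ Submodule.span k
      {y : A | ∃ (o : O) (a : A),
        Coalgebra.counit (R := k) o = (0 : k) ∧ y = φ o * a}) :
    Function.Bijective
      ((TensorProduct.map LinearMap.id π.toLinearMap) ∘ₗ ρ) ∧
    (∀ a b : A,
      ((TensorProduct.map LinearMap.id π.toLinearMap) ∘ₗ ρ) (a * b) =
      ((TensorProduct.map LinearMap.id π.toLinearMap) ∘ₗ ρ) a *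
      ((TensorProduct.map LinearMap.id π.toLinearMap) ∘ₗ ρ) b) ∧
    ((TensorProduct.map LinearMap.id π.toLinearMap) ∘ₗ ρ) 1 = 1 :=
  neutrally_graded_comodule_algebra_decomposition_general k O A φ ρ hρ1 hρmul hρcounit hρcoassoc hρφ
    B π hπsurj hπker
end
end

section
/- Let k be a field of characteristic ≠ 2, G an algebraic supergroup with associated Harish-Chandra pair (G₀, V), and H a closed super-subgroup of G corresponding to the sub-pair (H₀, W). Let v ∈ V. If e(a,v) := 1 + a·v ∈ H(A) for some super-commutative k-superalgebra A and some nonzero odd element a ∈ A₁, then v ∈ W. -/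
/-!
Extend a basis `w₁,…,w_r` of `W` to a basis `w₁,…,w_r,u₁,…,u_m` of `V` and write
`v = ∑ cᵢ wᵢ + ∑ dⱼ uⱼ`.  Additivity of `e(a,-)` and `e(a, c v) = e(c a, v)` put `e(a,v)` in
normal form `1 · ∏ e(cᵢ a, wᵢ) ∏ e(dⱼ a, uⱼ)`, while the normal form of `e(a,v) ∈ 𝐇(A)` with
respect to the `wᵢ` is also a normal form in `𝐆(A)`, with all coefficients at the `uⱼ` zero.
Uniqueness gives `dⱼ a = 0`, hence `dⱼ = 0` since `a ≠ 0`, i.e. `v ∈ W`.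
-/

open Module

theorem map_zero_of_map_add {M G : Type*} [AddZeroClass M] [Group G] {φ : M → G}
    (map_add : ∀ x y, φ (x + y) = φ x * φ y) : φ 0 = 1 := by
  simpa using map_add 0 0

theorem map_sum_eq_prod_ofFn {M G : Type*} [AddCommMonoid M] [Group G] {φ : M → G}
    (map_add : ∀ x y, φ (x + y) = φ x * φ y) :
    ∀ {n : ℕ} (f : Fin n → M), φ (∑ i, f i) = (List.ofFn fun i => φ (f i)).prod
  | 0, _ => by simp [map_zero_of_map_add map_add]
  | n + 1, f => by
    rw [Fin.sum_univ_succ, map_add, List.ofFn_succ, List.prod_cons, map_sum_eq_prod_ofFn map_add]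

section ExponentialPair

variable {k V A1 G : Type*} [Semiring k] [AddCommMonoid V] [Module k V]
  [AddCommMonoid A1] [Module k A1] [Group G] {e : A1 → V → G}

theorem e_zero_left (he_add : ∀ (a : A1) (v v' : V), e a (v + v') = e a v * e a v')
    (he_smul : ∀ (c : k) (a : A1) (v : V), e a (c • v) = e (c • a) v) (v : V) :
    e 0 v = 1 := by
  simpa [map_zero_of_map_add (he_add 0)] using (he_smul (0 : k) 0 v).symm

theorem e_eq_prod_ofFn_repr (he_add : ∀ (a : A1) (v v' : V), e a (v + v') = e a v * e a v')
    (he_smul : ∀ (c : k) (a : A1) (v : V), e a (c • v) = e (c • a) v)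
    {n : ℕ} (b : Basis (Fin n) k V) (a : A1) (v : V) :
    e a v = (List.ofFn fun j => e (b.repr v j • a) (b j)).prod := by
  conv_lhs => rw [← b.sum_repr v]
  rw [map_sum_eq_prod_ofFn (he_add a)]
  simp only [he_smul]

theorem prod_ofFn_append_zero (he_add : ∀ (a : A1) (v v' : V), e a (v + v') = e a v * e a v')
    (he_smul : ∀ (c : k) (a : A1) (v : V), e a (c • v) = e (c • a) v)
    {r m : ℕ} (β : Fin r → A1) (u : Fin (r + m) → V) :
    (List.ofFn fun j => e (Fin.append β 0 j) (u j)).prod =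
      (List.ofFn fun i => e (β i) (u (Fin.castAdd m i))).prod := by
  rw [List.ofFn_add, List.prod_append]
  simp only [Fin.append_left', Fin.append_right, Pi.zero_apply, e_zero_left he_add he_smul,
    List.ofFn_const, List.prod_replicate, one_pow, mul_one]
  rfl

end ExponentialPair

section BasisExtension

variable {k V : Type*} [Field k] [AddCommGroup V] [Module k V]

theorem Submodule.exists_finBasis_castAdd [FiniteDimensional k V] (W : Submodule k V) :
    ∃ (r m : ℕ) (b : Basis (Fin (r + m)) k V),
      Submodule.span k (Set.range (b ∘ Fin.castAdd m)) = W := by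
  obtain ⟨U, hU⟩ := W.exists_isCompl
  let bW := finBasis k W
  let b := ((bW.prod (finBasis k U)).map (W.prodEquivOfIsCompl U hU)).reindex finSumFinEquiv
  have hb : b ∘ Fin.castAdd _ = W.subtype ∘ bW := by
    ext i
    simp [b]
  refine ⟨_, _, b, ?_⟩
  rw [hb, Set.range_comp, Submodule.span_image, bW.span_eq, Submodule.map_top,
    Submodule.range_subtype]

theorem Module.Basis.mem_span_castAdd_of_repr_natAdd_eq_zero {r m : ℕ}
    (b : Basis (Fin (r + m)) k V) {v : V}
    (hv : ∀ i, b.repr v (Fin.natAdd r i) = 0) :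
    v ∈ Submodule.span k (Set.range (b ∘ Fin.castAdd m)) := by
  rw [← b.sum_repr v, Fin.sum_univ_add]
  simp only [hv, zero_smul, Finset.sum_const_zero, add_zero]
  exact Submodule.sum_mem _ fun i _ => Submodule.smul_mem _ _ (Submodule.subset_span ⟨i, rfl⟩)

end BasisExtension

theorem mem_W_of_e_mem_H_general
    (k : Type*) [Field k]
    (V : Type*) [AddCommGroup V] [Module k V] [FiniteDimensional k V]
    (W : Submodule k V)
    (A1 : Type*) [AddCommGroup A1] [Module k A1]
    (GA : Type*) [Group GA]
    (G0 H0 HA : Subgroup GA)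
    (hH0G0 : H0 ≤ G0)
    (e : A1 → V → GA)
    (he_add : ∀ (a : A1) (v v' : V), e a (v + v') = e a v * e a v')
    (he_smul : ∀ (c : k) (a : A1) (v : V), e a (c • v) = e (c • a) v)
    -- normal form in `𝐆(A)` for any basis of `V`
    (hGnf : ∀ (n : ℕ) (vb : Fin n → V), LinearIndependent k vb →
      Submodule.span k (Set.range vb) = ⊤ →
      Function.Bijective (fun p : G0 × (Fin n → A1) =>
        (p.1 : GA) * (List.ofFn fun i => e (p.2 i) (vb i)).prod))
    -- normal form in `𝐇(A)` for any basis of `W`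
    (hHnf : ∀ (r : ℕ) (wb : Fin r → V), LinearIndependent k wb →
      Submodule.span k (Set.range wb) = W →
      Set.range (fun p : H0 × (Fin r → A1) =>
        (p.1 : GA) * (List.ofFn fun i => e (p.2 i) (wb i)).prod) =
        (HA : Set GA))
    (v : V) (a : A1) (ha : a ≠ 0)
    (hmem : e a v ∈ HA) :
    v ∈ W := by
  obtain ⟨r, m, b, hbW⟩ := W.exists_finBasis_castAdd
  have hli : LinearIndependent k (b ∘ Fin.castAdd m) :=
    b.linearIndependent.comp _ (Fin.castAdd_injective r m)
  rw [← SetLike.mem_coe, ← hHnf r _ hli hbW] at hmem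
  obtain ⟨⟨h, β⟩, hβ⟩ := hmem
  have hnf : ((1 : G0), fun j => b.repr v j • a) = (⟨h, hH0G0 h.2⟩, Fin.append β 0) := by
    refine (hGnf _ b b.linearIndependent b.span_eq).1 ?_
    simp only [OneMemClass.coe_one, one_mul, prod_ofFn_append_zero he_add he_smul]
    rw [← e_eq_prod_ofFn_repr he_add he_smul, ← hβ]
    rfl
  rw [← hbW]
  refine b.mem_span_castAdd_of_repr_natAdd_eq_zero fun i => ?_
  have hcoef := congrFun (congrArg Prod.snd hnf) (Fin.natAdd r i)
  simp only [Fin.append_right, Pi.zero_apply] at hcoef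
  exact (smul_eq_zero.mp hcoef).resolve_right ha

theorem mem_W_of_e_mem_H
    (k : Type*) [Field k] (hchar : (2 : k) ≠ 0)
    (V : Type*) [AddCommGroup V] [Module k V] [FiniteDimensional k V]
    (W : Submodule k V)
    (A1 : Type*) [AddCommGroup A1] [Module k A1]
    (GA : Type*) [Group GA]
    (G0 H0 HA : Subgroup GA)
    (hH0G0 : H0 ≤ G0) (hH0HA : H0 ≤ HA)
    (e : A1 → V → GA)
    (he_add : ∀ (a : A1) (v v' : V), e a (v + v') = e a v * e a v')
    (he_smul : ∀ (c : k) (a : A1) (v : V), e a (c • v) = e (c • a) v)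
    -- normal form in `𝐆(A)` for any basis of `V`
    (hGnf : ∀ (n : ℕ) (vb : Fin n → V), LinearIndependent k vb →
      Submodule.span k (Set.range vb) = ⊤ →
      Function.Bijective (fun p : G0 × (Fin n → A1) =>
        (p.1 : GA) * (List.ofFn fun i => e (p.2 i) (vb i)).prod))
    -- normal form in `𝐇(A)` for any basis of `W`
    (hHnf : ∀ (r : ℕ) (wb : Fin r → V), LinearIndependent k wb →
      Submodule.span k (Set.range wb) = W →
      Set.range (fun p : H0 × (Fin r → A1) =>
        (p.1 : GA) * (List.ofFn fun i => e (p.2 i) (wb i)).prod) =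
        (HA : Set GA))
    (v : V) (a : A1) (ha : a ≠ 0)
    (hmem : e a v ∈ HA) :
    v ∈ W :=
  mem_W_of_e_mem_H_general k V W A1 GA G0 H0 HA hH0G0 e he_add he_smul hGnf hHnf v a ha hmem
end
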